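/- arXiv:2310.02772 — 12 statements merged into one kernel-verified Lean document; each statement's English description precedes it below -/
import Mathlib

section
/- For every t ≥ 1, the LIF membrane potential satisfies u(t) = Û(t) − V_th λ â(t−1). -/
open Finset Matrix

/-- The Heaviside step function: `H z = 1` if `z ≥ 0`, else `0`. -/
noncomputable def Heaviside (z : ℝ) : ℝ := if 0 ≤ z then 1 else 0

/-- for every `t ≥ 1`, the LIF membrane potential satisfies
`u(t) = Û(t) − V_th λ â(t−1)`. -/
theorem lif_potential_eq_saf_potential
    (lam Vth : ℝ) (m n : ℕ)
    (W : Matrix (Fin n) (Fin m) ℝ) (b : Fin n → ℝ)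
    (x : ℕ → Fin m → ℝ) (hx0 : x 0 = 0)
    (u s : ℕ → Fin n → ℝ)
    (hs0 : s 0 = 0)
    (hu : ∀ t, 1 ≤ t →
      u t = lam • (u (t - 1) - Vth • s (t - 1)) + W.mulVec (x t) + b)
    (hs : ∀ t, 1 ≤ t → ∀ i, s t i = Heaviside (u t i - Vth))
    (ax : ℕ → Fin m → ℝ)
    (hax : ∀ t, ax t = ∑ τ ∈ Finset.range (t + 1), lam ^ (t - τ) • x τ)
    (ahat : ℕ → Fin n → ℝ)
    (ha : ∀ t, ahat t = ∑ τ ∈ Finset.range (t + 1), lam ^ (t - τ) • s τ)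
    (U : ℕ → Fin n → ℝ)
    (hU0 : U 0 = u 0)
    (hU : ∀ t, 1 ≤ t →
      U t = lam • U (t - 1) + W.mulVec (ax t - lam • ax (t - 1)) + b) :
    ∀ t, 1 ≤ t → u t = U t - (Vth * lam) • ahat (t - 1) := by

  have hax_step : ∀ t : ℕ, 1 ≤ t → ax t = lam • ax (t - 1) + x t := by
    intro t ht
    obtain ⟨k, rfl⟩ : ∃ k, t = k + 1 := ⟨t - 1, (Nat.succ_pred_eq_of_pos ht).symm⟩
    simp only [hax, Nat.add_sub_cancel]
    rw [Finset.sum_range_succ]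
    have h1 : ∀ τ ∈ Finset.range (k + 1), lam ^ (k + 1 - τ) • x τ
        = lam • (lam ^ (k - τ) • x τ) := by
      intro τ hτ
      rw [Finset.mem_range] at hτ
      rw [smul_smul, ← pow_succ']
      congr 2
      omega
    rw [Finset.sum_congr rfl h1, ← Finset.smul_sum]
    simp
  have ha_step : ∀ t : ℕ, 1 ≤ t → ahat t = lam • ahat (t - 1) + s t := by
    intro t ht
    obtain ⟨k, rfl⟩ : ∃ k, t = k + 1 := ⟨t - 1, (Nat.succ_pred_eq_of_pos ht).symm⟩
    simp only [ha, Nat.add_sub_cancel]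
    rw [Finset.sum_range_succ]
    have h1 : ∀ τ ∈ Finset.range (k + 1), lam ^ (k + 1 - τ) • s τ
        = lam • (lam ^ (k - τ) • s τ) := by
      intro τ hτ
      rw [Finset.mem_range] at hτ
      rw [smul_smul, ← pow_succ']
      congr 2
      omega
    rw [Finset.sum_congr rfl h1, ← Finset.smul_sum]
    simp
  have hWx : ∀ t : ℕ, 1 ≤ t →
      W.mulVec (ax t - lam • ax (t - 1)) = W.mulVec (x t) := by
    intro t ht
    congr 1
    rw [hax_step t ht]
    rw [add_sub_cancel_left]
  have hax0 : ax 0 = 0 := by simp [hax, hx0]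
  have ha0 : ahat 0 = 0 := by simp [ha, hs0]
  intro t ht
  induction t with
  | zero => omega
  | succ k ih =>
    have hu' := hu (k + 1) (by omega)
    have hU' := hU (k + 1) (by omega)
    rw [hWx (k + 1) (by omega)] at hU'
    simp only [Nat.add_sub_cancel] at hu' hU' ⊢
    rcases Nat.eq_zero_or_pos k with hk | hk
    · subst hk
      rw [hu', hU', hU0, hs0, ha0]
      module
    · have ihk := ih hk
      rw [hu', hU', ihk, ha_step k hk]
      module
end

section
/- For every t ≥ 1 and every coordinate i, the spike satisfies s(t)_i = H(Û(t)_i − V_th (λ â(t−1)_i + 1)); that is, the spike at time t can be computed from the potential accumulation Û(t) and the previous spike accumulation â(t−1) alone. -/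
open Finset Matrix

/-- for every `t ≥ 1` and every coordinate `i`, the spike satisfies
`s(t)_i = H(Û(t)_i − V_th (λ â(t−1)_i + 1))`. -/
theorem lif_spike_from_saf
    (lam Vth : ℝ) (m n : ℕ)
    (W : Matrix (Fin n) (Fin m) ℝ) (b : Fin n → ℝ)
    (x : ℕ → Fin m → ℝ) (hx0 : x 0 = 0)
    (u s : ℕ → Fin n → ℝ)
    (hs0 : s 0 = 0)
    (hu : ∀ t, 1 ≤ t →
      u t = lam • (u (t - 1) - Vth • s (t - 1)) + W.mulVec (x t) + b)
    (hs : ∀ t, 1 ≤ t → ∀ i, s t i = Heaviside (u t i - Vth))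
    (ax : ℕ → Fin m → ℝ)
    (hax : ∀ t, ax t = ∑ τ ∈ Finset.range (t + 1), lam ^ (t - τ) • x τ)
    (ahat : ℕ → Fin n → ℝ)
    (ha : ∀ t, ahat t = ∑ τ ∈ Finset.range (t + 1), lam ^ (t - τ) • s τ)
    (U : ℕ → Fin n → ℝ)
    (hU0 : U 0 = u 0)
    (hU : ∀ t, 1 ≤ t →
      U t = lam • U (t - 1) + W.mulVec (ax t - lam • ax (t - 1)) + b) :
    ∀ t, 1 ≤ t → ∀ i, s t i = Heaviside (U t i - Vth * (lam * ahat (t - 1) i + 1)) := by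
  have hax_step : ∀ k : ℕ, ax (k + 1) - lam • ax k = x (k + 1) := by
    intro k
    rw [hax, hax, Finset.sum_range_succ, Finset.smul_sum]
    have hcong : ∀ τ ∈ Finset.range (k + 1),
        lam • (lam ^ (k - τ) • x τ) = lam ^ (k + 1 - τ) • x τ := by
      intro τ hτ
      rw [Finset.mem_range] at hτ
      rw [smul_smul, ← pow_succ']
      congr 2
      omega
    rw [Finset.sum_congr rfl hcong]
    simp
  have ha_step : ∀ k : ℕ, ahat (k + 1) = lam • ahat k + s (k + 1) := by
    intro k
    rw [ha, ha, Finset.sum_range_succ, Finset.smul_sum]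
    have hcong : ∀ τ ∈ Finset.range (k + 1),
        lam • (lam ^ (k - τ) • s τ) = lam ^ (k + 1 - τ) • s τ := by
      intro τ hτ
      rw [Finset.mem_range] at hτ
      rw [smul_smul, ← pow_succ']
      congr 2
      omega
    rw [Finset.sum_congr rfl hcong]
    simp
  have ha0 : ahat 0 = 0 := by
    rw [ha]; simp [hs0]
  have key : ∀ t : ℕ, 1 ≤ t → U t = u t + (lam * Vth) • ahat (t - 1) := by
    intro t ht
    induction t, ht using Nat.le_induction with
    | base =>
      have h1 := hU 1 le_rfl
      have h2 := hu 1 le_rfl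
      simp only [Nat.sub_self] at h1 h2
      rw [h1, hax_step 0, hU0, h2, hs0, ha0]
      funext i
      simp [smul_eq_mul]
    | succ t ht ih =>
      have h1 := hU (t + 1) (by omega)
      have h2 := hu (t + 1) (by omega)
      simp only [Nat.add_sub_cancel] at h1 h2
      obtain ⟨k, rfl⟩ : ∃ k, t = k + 1 := ⟨t - 1, by omega⟩
      have h3 := ha_step k
      simp only [Nat.add_sub_cancel] at ih ⊢
      rw [h1, hax_step (k + 1), ih, h2, h3]
      funext i
      simp only [Pi.add_apply, Pi.smul_apply, Pi.sub_apply, smul_eq_mul]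
      ring
  intro t ht i
  rw [hs t ht i, key t ht]
  congr 1
  simp only [Pi.add_apply, Pi.smul_apply, smul_eq_mul]
  ring
end

section
/- For every t ≥ 1, the spike accumulation satisfies the SAF forward recurrence: for every coordinate i, â(t)_i = λ â(t−1)_i + H(Û(t)_i − V_th (λ â(t−1)_i + 1)). -/
open Finset Matrix

lemma acc_step {α : Type*} [AddCommMonoid α] [Module ℝ α] (lam : ℝ) (g : ℕ → α)
    (t : ℕ) (ht : 1 ≤ t) :
    ∑ τ ∈ Finset.range (t + 1), lam ^ (t - τ) • g τ
      = g t + lam • ∑ τ ∈ Finset.range ((t - 1) + 1), lam ^ ((t - 1) - τ) • g τ := by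
  obtain ⟨k, rfl⟩ : ∃ k, t = k + 1 := ⟨t - 1, by omega⟩
  rw [Finset.sum_range_succ, Nat.sub_self, pow_zero, one_smul, Finset.smul_sum, add_comm]
  congr 1
  · simp only [Nat.add_sub_cancel]
    refine Finset.sum_congr rfl fun τ hτ => ?_
    have hτk : τ < k + 1 := Finset.mem_range.mp hτ
    have h1 : k + 1 - τ = (k - τ) + 1 := by omega
    rw [h1, pow_succ, mul_comm, ← smul_smul]

/-- for every `t ≥ 1`, the spike accumulation satisfies the SAF forward
recurrence `â(t)_i = λ â(t−1)_i + H(Û(t)_i − V_th (λ â(t−1)_i + 1))`. -/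
theorem saf_spike_accumulation_recurrence
    (lam Vth : ℝ) (m n : ℕ)
    (W : Matrix (Fin n) (Fin m) ℝ) (b : Fin n → ℝ)
    (x : ℕ → Fin m → ℝ) (hx0 : x 0 = 0)
    (u s : ℕ → Fin n → ℝ)
    (hs0 : s 0 = 0)
    (hu : ∀ t, 1 ≤ t →
      u t = lam • (u (t - 1) - Vth • s (t - 1)) + W.mulVec (x t) + b)
    (hs : ∀ t, 1 ≤ t → ∀ i, s t i = Heaviside (u t i - Vth))
    (ax : ℕ → Fin m → ℝ)
    (hax : ∀ t, ax t = ∑ τ ∈ Finset.range (t + 1), lam ^ (t - τ) • x τ)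
    (ahat : ℕ → Fin n → ℝ)
    (ha : ∀ t, ahat t = ∑ τ ∈ Finset.range (t + 1), lam ^ (t - τ) • s τ)
    (U : ℕ → Fin n → ℝ)
    (hU0 : U 0 = u 0)
    (hU : ∀ t, 1 ≤ t →
      U t = lam • U (t - 1) + W.mulVec (ax t - lam • ax (t - 1)) + b) :
    ∀ t, 1 ≤ t → ∀ i,
      ahat t i = lam * ahat (t - 1) i + Heaviside (U t i - Vth * (lam * ahat (t - 1) i + 1)) := by
  have ha0 : ahat 0 = 0 := by rw [ha]; simp [hs0]
  have haxrec : ∀ t, 1 ≤ t → ax t = x t + lam • ax (t - 1) := by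
    intro t ht; rw [hax, hax, acc_step lam x t ht]
  have harec : ∀ t, 1 ≤ t → ahat t = s t + lam • ahat (t - 1) := by
    intro t ht; rw [ha, ha, acc_step lam s t ht]
  have haxdiff : ∀ t, 1 ≤ t → ax t - lam • ax (t - 1) = x t := by
    intro t ht; rw [haxrec t ht]; abel
  have hUu : ∀ t, 1 ≤ t → U t = u t + (Vth * lam) • ahat (t - 1) := by
    intro t ht
    induction t, ht using Nat.le_induction with
    | base =>
      rw [hU 1 le_rfl, hu 1 le_rfl, haxdiff 1 le_rfl]
      simp [hU0, hs0, ha0]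
    | succ t ht IH =>
      have h1 : t + 1 - 1 = t := by omega
      rw [hU (t + 1) (by omega), hu (t + 1) (by omega), haxdiff (t + 1) (by omega), h1,
        IH, harec t ht]
      funext i
      simp only [Pi.add_apply, Pi.smul_apply, Pi.sub_apply, smul_eq_mul]
      ring
  intro t ht i
  have key : U t i - Vth * (lam * ahat (t - 1) i + 1) = u t i - Vth := by
    rw [hUu t ht]
    simp only [Pi.add_apply, Pi.smul_apply, smul_eq_mul]
    ring
  have hsa := congrFun (harec t ht) i
  simp only [Pi.add_apply, Pi.smul_apply, smul_eq_mul] at hsa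
  rw [hsa, hs t ht i, key, add_comm]
end

section
/- The sequences (u, s) defined from the SAF forward process satisfy the LIF dynamics: for every t ≥ 1, u(t) = λ(u(t−1) − V_th s(t−1)) + W x(t) + b and s(t)_i = H(u(t)_i − V_th) for every coordinate i; moreover â(t) = Σ_{τ=0}^{t} λ^(t−τ) s(τ) for all t. Hence the forward processes of SAF and of the SNN composed of LIF neurons are mutually convertible. -/
open Finset Matrix

/-- the sequences `(u, s)` defined from the SAF forward process satisfy the
LIF dynamics, and `â(t) = ∑_{τ≤t} λ^(t−τ) s(τ)`; hence the SAF and LIF forward processes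
are mutually convertible. -/
theorem saf_forward_gives_lif
    (lam Vth : ℝ) (m n : ℕ)
    (W : Matrix (Fin n) (Fin m) ℝ) (b : Fin n → ℝ)
    (x : ℕ → Fin m → ℝ) (hx0 : x 0 = 0)
    (u₀ : Fin n → ℝ)
    (ax : ℕ → Fin m → ℝ)
    (hax : ∀ t, ax t = ∑ τ ∈ Finset.range (t + 1), lam ^ (t - τ) • x τ)
    (ahat U : ℕ → Fin n → ℝ)
    (ha0 : ahat 0 = 0)
    (hU0 : U 0 = u₀)
    (hU : ∀ t, 1 ≤ t →
      U t = lam • U (t - 1) + W.mulVec (ax t - lam • ax (t - 1)) + b)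
    (ha : ∀ t, 1 ≤ t → ∀ i,
      ahat t i = lam * ahat (t - 1) i
        + Heaviside (U t i - Vth * (lam * ahat (t - 1) i + 1)))
    (s u : ℕ → Fin n → ℝ)
    (hs0 : s 0 = 0)
    (hsdef : ∀ t, 1 ≤ t → s t = ahat t - lam • ahat (t - 1))
    (hu0 : u 0 = u₀)
    (hudef : ∀ t, 1 ≤ t → u t = U t - (Vth * lam) • ahat (t - 1)) :
    (∀ t, 1 ≤ t →
      (u t = lam • (u (t - 1) - Vth • s (t - 1)) + W.mulVec (x t) + b ∧
        ∀ i, s t i = Heaviside (u t i - Vth))) ∧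
    (∀ t, ahat t = ∑ τ ∈ Finset.range (t + 1), lam ^ (t - τ) • s τ) := by
  -- recurrence for ax
  have hax_rec : ∀ k : ℕ, ax (k + 1) = lam • ax k + x (k + 1) := by
    intro k
    rw [hax, hax, Finset.sum_range_succ, Nat.sub_self, pow_zero, one_smul, smul_sum]
    congr 1
    refine Finset.sum_congr rfl fun τ hτ => ?_
    have h2 := Finset.mem_range.mp hτ
    rw [smul_smul, ← pow_succ', show k - τ + 1 = k + 1 - τ by omega]
  -- recurrence for ahat
  have ha_rec : ∀ t, 1 ≤ t → ahat t = lam • ahat (t - 1) + s t := by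
    intro t ht
    rw [hsdef t ht]
    abel
  constructor
  · intro t ht
    constructor
    · -- voltage equation
      match t, ht with
      | 1, _ =>
        have hax0 : ax 0 = 0 := by rw [hax]; simp [hx0]
        have e5 : ax 1 - lam • ax 0 = x 1 := by rw [hax_rec 0, hax0]; abel
        rw [hudef 1 le_rfl, hU 1 le_rfl]
        simp only [Nat.sub_self, ha0, hU0, hu0, hs0, smul_zero, sub_zero, e5]
      | (k + 2), _ =>
        have e5 : ax (k + 2) - lam • ax (k + 1) = x (k + 2) := by
          rw [hax_rec (k + 1)]; abel
        rw [hudef (k + 2) (by omega), hU (k + 2) (by omega)]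
        rw [show (k + 2 - 1) = k + 1 from rfl, e5,
          hudef (k + 1) (by omega), hsdef (k + 1) (by omega),
          show (k + 1 - 1) = k from rfl, ha_rec (k + 1) (by omega),
          show (k + 1 - 1) = k from rfl, hsdef (k + 1) (by omega),
          show (k + 1 - 1) = k from rfl]
        funext i
        simp only [Pi.add_apply, Pi.sub_apply, Pi.smul_apply, smul_eq_mul]
        ring
    · -- spike equation
      intro i
      rw [hsdef t ht]
      simp only [Pi.sub_apply, Pi.smul_apply, smul_eq_mul]
      rw [ha t ht i]
      have harg : U t i - Vth * (lam * ahat (t - 1) i + 1) = u t i - Vth := by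
        rw [hudef t ht]
        simp only [Pi.sub_apply, Pi.smul_apply, smul_eq_mul]
        ring
      rw [harg]
      ring
  · intro t
    induction t with
    | zero => simp [ha0, hs0]
    | succ k ih =>
      rw [Finset.sum_range_succ, Nat.sub_self, pow_zero, one_smul,
        ha_rec (k + 1) (by omega), show (k + 1 - 1) = k from rfl]
      congr 1
      rw [ih, smul_sum]
      refine Finset.sum_congr rfl fun τ hτ => ?_
      have h2 := Finset.mem_range.mp hτ
      rw [smul_smul, ← pow_succ', show k - τ + 1 = k + 1 - τ by omega]
end

section
/- In the IF-neuron case λ = 1: for every t ≥ 1, Û(t) = W â_x(t) + t·b + Û(0) and u(t) = Û(t) − V_th â(t−1); hence the SAF forward process with λ = 1 and the forward process of the SNN composed of IF neurons are mutually convertible. -/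
open Finset Matrix

/-- in the IF-neuron case `λ = 1`, for every `t ≥ 1` one has
`Û(t) = W â_x(t) + t·b + Û(0)` and `u(t) = Û(t) − V_th â(t−1)`; hence the SAF forward
process with `λ = 1` and the forward process of the SNN composed of IF neurons are
mutually convertible. -/
theorem saf_if_neuron_case
    (Vth : ℝ) (m n : ℕ)
    (W : Matrix (Fin n) (Fin m) ℝ) (b : Fin n → ℝ)
    (x : ℕ → Fin m → ℝ) (hx0 : x 0 = 0)
    (u s : ℕ → Fin n → ℝ)
    (hs0 : s 0 = 0)
    (hu : ∀ t, 1 ≤ t →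
      u t = u (t - 1) - Vth • s (t - 1) + W.mulVec (x t) + b)
    (hs : ∀ t, 1 ≤ t → ∀ i, s t i = Heaviside (u t i - Vth))
    (ax : ℕ → Fin m → ℝ)
    (hax : ∀ t, ax t = ∑ τ ∈ Finset.range (t + 1), x τ)
    (ahat : ℕ → Fin n → ℝ)
    (ha : ∀ t, ahat t = ∑ τ ∈ Finset.range (t + 1), s τ)
    (U : ℕ → Fin n → ℝ)
    (hU0 : U 0 = u 0)
    (hU : ∀ t, 1 ≤ t →
      U t = U (t - 1) + W.mulVec (ax t - ax (t - 1)) + b) :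
    ∀ t, 1 ≤ t →
      U t = W.mulVec (ax t) + (t : ℝ) • b + U 0 ∧
      u t = U t - Vth • ahat (t - 1) := by
  have hax0 : ax 0 = 0 := by
    rw [hax]; simp [hx0]
  have haxstep : ∀ t : ℕ, 1 ≤ t → ax t - ax (t - 1) = x t := by
    intro t ht
    obtain ⟨k, rfl⟩ := Nat.exists_eq_add_of_le ht
    rw [hax, hax]
    simp [Finset.sum_range_succ, add_comm 1 k]
  intro t ht
  induction t, ht using Nat.le_induction with
  | base =>
    have h1 : U 1 = W.mulVec (ax 1) + (1 : ℝ) • b + U 0 := by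
      rw [hU 1 le_rfl]
      simp [hax0]
      ring_nf
    refine ⟨by simpa using h1, ?_⟩
    have hu1 := hu 1 le_rfl
    simp [hs0] at hu1
    rw [hu1, h1, hU0, ha]
    have : ax 1 = x 1 := by
      have := haxstep 1 le_rfl
      simpa [hax0] using this
    simp [hs0, this]
    abel
  | succ t ht ih =>
    obtain ⟨ih1, ih2⟩ := ih
    have hstep := haxstep (t + 1) (by omega)
    simp only [Nat.add_sub_cancel] at hstep
    have haxt1 : ax (t + 1) = ax t + x (t + 1) := by
      have := hstep; linear_combination this
    have h1 : U (t + 1) = W.mulVec (ax (t + 1)) + ((t + 1 : ℕ) : ℝ) • b + U 0 := by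
      have hUstep := hU (t + 1) (by omega)
      simp only [Nat.add_sub_cancel] at hUstep
      rw [hUstep, ih1, haxt1]
      rw [Matrix.mulVec_add, Matrix.mulVec_sub, Matrix.mulVec_add]
      push_cast
      module
    refine ⟨h1, ?_⟩
    have hustep := hu (t + 1) (by omega)
    simp only [Nat.add_sub_cancel] at hustep
    have hahat : ahat t = ahat (t - 1) + s t := by
      rw [ha, ha]
      obtain ⟨k, rfl⟩ := Nat.exists_eq_add_of_le ht
      simp [Finset.sum_range_succ, add_comm 1 k]
    have hUstep := hU (t + 1) (by omega)
    simp only [Nat.add_sub_cancel] at hUstep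
    rw [hustep, ih2, Nat.add_sub_cancel, hUstep, hahat, hstep]
    rw [smul_add]
    abel
end

section
/- For every t ≥ 1, the membrane potential of the LIF network with a feedforward connection satisfies u(t) = Û(t) − V_th λ â(t−1), where Û is the feedforward potential accumulation defined by the closed form Û(t) = W â_x(t) + (Σ_{τ=0}^{t−1} λ^τ) b + λ^t u(0) + W_f â_f(t). -/
open Finset Matrix

lemma acc_succ {k : ℕ} (lam : ℝ) (a : ℕ → Fin k → ℝ) (t : ℕ) :
    (∑ τ ∈ Finset.range (t + 1 + 1), lam ^ (t + 1 - τ) • a τ)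
      = lam • (∑ τ ∈ Finset.range (t + 1), lam ^ (t - τ) • a τ) + a (t + 1) := by
  rw [Finset.sum_range_succ, Finset.smul_sum]
  congr 1
  · apply Finset.sum_congr rfl
    intro τ hτ
    rw [Finset.mem_range] at hτ
    rw [smul_smul, ← pow_succ']
    have : t + 1 - τ = t - τ + 1 := by omega
    rw [this]
  · simp

/-- with a feedforward connection, for every `t ≥ 1`,
`u(t) = Û(t) − V_th λ â(t−1)` where `Û` is the feedforward potential accumulation. -/
theorem lif_feedforward_potential_eq_saf
    (lam Vth : ℝ) (m n p : ℕ)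
    (W : Matrix (Fin n) (Fin m) ℝ) (Wf : Matrix (Fin n) (Fin p) ℝ)
    (b : Fin n → ℝ)
    (x : ℕ → Fin m → ℝ) (hx0 : x 0 = 0)
    (xf : ℕ → Fin p → ℝ) (hxc0 : xf 0 = 0)
    (u s : ℕ → Fin n → ℝ)
    (hs0 : s 0 = 0)
    (hu : ∀ t, 1 ≤ t →
      u t = lam • (u (t - 1) - Vth • s (t - 1)) + W.mulVec (x t) + b
        + Wf.mulVec (xf t))
    (hs : ∀ t, 1 ≤ t → ∀ i, s t i = Heaviside (u t i - Vth))
    (ax : ℕ → Fin m → ℝ)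
    (hax : ∀ t, ax t = ∑ τ ∈ Finset.range (t + 1), lam ^ (t - τ) • x τ)
    (af : ℕ → Fin p → ℝ)
    (hac : ∀ t, af t = ∑ τ ∈ Finset.range (t + 1), lam ^ (t - τ) • xf τ)
    (ahat : ℕ → Fin n → ℝ)
    (ha : ∀ t, ahat t = ∑ τ ∈ Finset.range (t + 1), lam ^ (t - τ) • s τ)
    (U : ℕ → Fin n → ℝ)
    (hU0 : U 0 = u 0)
    (hU : ∀ t, 1 ≤ t →
      U t = W.mulVec (ax t) + (∑ τ ∈ Finset.range t, lam ^ τ) • b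
        + lam ^ t • u 0 + Wf.mulVec (af t)) :
    ∀ t, 1 ≤ t → u t = U t - (Vth * lam) • ahat (t - 1) := by
  intro t ht
  induction t, ht using Nat.le_induction with
  | base =>
    have hax1 : ax 1 = x 1 := by
      rw [hax]
      simp [Finset.sum_range_succ, hx0]
    have haf1 : af 1 = xf 1 := by
      rw [hac]
      simp [Finset.sum_range_succ, hxc0]
    have hah0 : ahat 0 = 0 := by
      rw [ha]; simp [hs0]
    rw [hu 1 le_rfl, hU 1 le_rfl, hax1, haf1]
    simp [hs0, hah0]
    module
  | succ t ht ih =>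
    obtain ⟨k, rfl⟩ : ∃ k, t = k + 1 := ⟨t - 1, by omega⟩
    have ih' := ih
    simp only [Nat.add_sub_cancel] at ih' ⊢
    have hax' : ax (k + 2) = lam • ax (k + 1) + x (k + 2) := by
      rw [hax, hax]; exact acc_succ lam x (k + 1)
    have haf' : af (k + 2) = lam • af (k + 1) + xf (k + 2) := by
      rw [hac, hac]; exact acc_succ lam xf (k + 1)
    have hah' : ahat (k + 1) = lam • ahat k + s (k + 1) := by
      rw [ha, ha]; exact acc_succ lam s k
    rw [hu (k + 2) (by omega), hU (k + 2) (by omega), hax', haf', hah']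
    have hp : lam ^ (k + 2) = lam * lam ^ (k + 1) := by ring
    simp only [Nat.succ_sub_one, Nat.add_sub_cancel, ih', hU (k + 1) (by omega),
      Matrix.mulVec_add, Matrix.mulVec_smul, geom_sum_succ, hp]
    module
end

section
/- For every t ≥ 1 and every coordinate i, in the LIF network with a feedforward connection, s(t)_i = H(Û(t)_i − V_th(λ â(t−1)_i + 1)) and â(t)_i = λ â(t−1)_i + H(Û(t)_i − V_th(λ â(t−1)_i + 1)); i.e., the SAF forward recurrence with feedforward connection reproduces the spikes and spike accumulations of the LIF network with feedforward connection. -/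
open Finset Matrix

lemma accum_step {V : Type*} [AddCommMonoid V] [Module ℝ V] (lam : ℝ) (g : ℕ → V) (t : ℕ)
    (ht : 1 ≤ t) :
    ∑ τ ∈ Finset.range (t + 1), lam ^ (t - τ) • g τ
      = lam • (∑ τ ∈ Finset.range t, lam ^ (t - 1 - τ) • g τ) + g t := by
  obtain ⟨k, rfl⟩ : ∃ k, t = k + 1 := ⟨t - 1, (Nat.succ_pred_eq_of_pos ht).symm⟩
  rw [Finset.sum_range_succ, Finset.smul_sum]
  simp only [Nat.sub_self, pow_zero, one_smul, Nat.add_sub_cancel]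
  congr 1
  refine Finset.sum_congr rfl fun τ hτ => ?_
  have hτk := Finset.mem_range.mp hτ
  have h1 : k + 1 - τ = (k - τ) + 1 := by omega
  rw [h1, pow_succ']
  exact mul_smul _ _ _

/-- with a feedforward connection, for every `t ≥ 1` and coordinate `i`,
`s(t)_i = H(Û(t)_i − V_th(λ â(t−1)_i + 1))` and
`â(t)_i = λ â(t−1)_i + H(Û(t)_i − V_th(λ â(t−1)_i + 1))`. -/
theorem saf_feedforward_recurrence
    (lam Vth : ℝ) (m n p : ℕ)
    (W : Matrix (Fin n) (Fin m) ℝ) (Wf : Matrix (Fin n) (Fin p) ℝ)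
    (b : Fin n → ℝ)
    (x : ℕ → Fin m → ℝ) (hx0 : x 0 = 0)
    (xf : ℕ → Fin p → ℝ) (hxc0 : xf 0 = 0)
    (u s : ℕ → Fin n → ℝ)
    (hs0 : s 0 = 0)
    (hu : ∀ t, 1 ≤ t →
      u t = lam • (u (t - 1) - Vth • s (t - 1)) + W.mulVec (x t) + b
        + Wf.mulVec (xf t))
    (hs : ∀ t, 1 ≤ t → ∀ i, s t i = Heaviside (u t i - Vth))
    (ax : ℕ → Fin m → ℝ)
    (hax : ∀ t, ax t = ∑ τ ∈ Finset.range (t + 1), lam ^ (t - τ) • x τ)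
    (af : ℕ → Fin p → ℝ)
    (hac : ∀ t, af t = ∑ τ ∈ Finset.range (t + 1), lam ^ (t - τ) • xf τ)
    (ahat : ℕ → Fin n → ℝ)
    (ha : ∀ t, ahat t = ∑ τ ∈ Finset.range (t + 1), lam ^ (t - τ) • s τ)
    (U : ℕ → Fin n → ℝ)
    (hU0 : U 0 = u 0)
    (hU : ∀ t, 1 ≤ t →
      U t = W.mulVec (ax t) + (∑ τ ∈ Finset.range t, lam ^ τ) • b
        + lam ^ t • u 0 + Wf.mulVec (af t)) :
    ∀ t, 1 ≤ t → ∀ i,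
      s t i = Heaviside (U t i - Vth * (lam * ahat (t - 1) i + 1)) ∧
      ahat t i = lam * ahat (t - 1) i
        + Heaviside (U t i - Vth * (lam * ahat (t - 1) i + 1)) := by
  -- recurrences for the accumulators
  have hax' : ∀ t, 1 ≤ t → ax t = lam • ax (t - 1) + x t := by
    intro t ht; rw [hax, hax, accum_step lam x t ht, Nat.sub_add_cancel ht]
  have hac' : ∀ t, 1 ≤ t → af t = lam • af (t - 1) + xf t := by
    intro t ht; rw [hac, hac, accum_step lam xf t ht, Nat.sub_add_cancel ht]
  have ha' : ∀ t, 1 ≤ t → ahat t = lam • ahat (t - 1) + s t := by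
    intro t ht; rw [ha, ha, accum_step lam s t ht, Nat.sub_add_cancel ht]
  have hahat0 : ahat 0 = 0 := by
    rw [ha]; simp [hs0]
  -- key identity
  have key : ∀ t, 1 ≤ t → u t = U t - (Vth * lam) • ahat (t - 1) := by
    intro t ht
    induction t with
    | zero => omega
    | succ k ih =>
      rcases Nat.eq_or_lt_of_le ht with h1 | h1
      · -- k + 1 = 1, i.e. k = 0
        have hk : k = 0 := by omega
        subst hk
        rw [hu 1 (by omega), hU 1 (by omega)]
        simp only [Nat.sub_self, hahat0, smul_zero, sub_zero, hs0]
        have hax1 : ax 1 = x 1 := by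
          rw [hax]; simp [Finset.sum_range_succ, hx0]
        have hac1 : af 1 = xf 1 := by
          rw [hac]; simp [Finset.sum_range_succ, hxc0]
        rw [hax1, hac1]
        simp only [Finset.range_one, Finset.sum_singleton, pow_zero, one_smul, pow_one,
          smul_zero, sub_zero]
        funext i
        simp [Pi.smul_apply, smul_eq_mul]
        ring
      · -- k ≥ 1
        have hk : 1 ≤ k := by omega
        have ihk := ih hk
        rw [hu (k + 1) (by omega), hU (k + 1) (by omega)]
        simp only [Nat.add_sub_cancel]
        rw [ihk, ha' k hk, hax' (k + 1) (by omega), hac' (k + 1) (by omega)]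
        simp only [Nat.add_sub_cancel]
        rw [hU k hk]
        rw [Matrix.mulVec_add, Matrix.mulVec_smul, Matrix.mulVec_add, Matrix.mulVec_smul,
          geom_sum_succ]
        funext i
        simp only [Pi.add_apply, Pi.sub_apply, Pi.smul_apply, smul_eq_mul, pow_succ]
        ring
  -- conclusion
  intro t ht i
  have h1 : u t i - Vth = U t i - Vth * (lam * ahat (t - 1) i + 1) := by
    rw [key t ht]
    simp only [Pi.sub_apply, Pi.smul_apply, smul_eq_mul]
    ring
  have hspike : s t i = Heaviside (U t i - Vth * (lam * ahat (t - 1) i + 1)) := by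
    rw [hs t ht i, h1]
  refine ⟨hspike, ?_⟩
  rw [ha' t ht]
  simp only [Pi.add_apply, Pi.smul_apply, smul_eq_mul]
  rw [hspike]
end

section
/- Theorem 1 (SAF-E is identical to OTTT_O at the surrogate-gradient level): for every layer index i ∈ {1,…,N} one has D_SAF^i = D_OT^i, and consequently, for every l ∈ {0,…,N−1}, the SAF-E gradient with respect to W^l, namely the outer product â^l(t) ⊗ (v · (D_SAF^N W^{N−1})(D_SAF^{N−1} W^{N−2}) ⋯ (D_SAF^{l+2} W^{l+1}) · D_SAF^{l+1}), equals the OTTT_O gradient â^l(t) ⊗ (v · (D_OT^N W^{N−1})(D_OT^{N−1} W^{N−2}) ⋯ (D_OT^{l+2} W^{l+1}) · D_OT^{l+1}). -/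
open Matrix

/-- Backward chain of surrogate-gradient Jacobians: `chainD n Wm D l g v` is the row vector
`v · (D^{l+g} W^{l+g-1}) (D^{l+g-1} W^{l+g-2}) ⋯ (D^{l+1} W^{l}) · D^{l}`, computed from the
row vector `v ∈ ℝ^{n_{l+g}}` down to level `l`. -/
noncomputable def chainD (n : ℕ → ℕ)
    (Wm : ∀ k, Matrix (Fin (n (k + 1))) (Fin (n k)) ℝ)
    (D : ∀ k, Matrix (Fin (n k)) (Fin (n k)) ℝ) :
    (l : ℕ) → (g : ℕ) → (Fin (n (l + g)) → ℝ) → (Fin (n l) → ℝ)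
  | l, 0, v => Matrix.vecMul v (D l)
  | l, g + 1, v => chainD n Wm D l g
      (Matrix.vecMul (Matrix.vecMul v (D (l + g + 1))) (Wm (l + g)))

/-- Theorem 1, SAF-E ≡ OTTT_O: for every layer `i ∈ {1,…,N}` the
surrogate-gradient diagonal matrices coincide, `D_SAF^i = D_OT^i`, and for every layer
`l ∈ {0,…,N−1}` (encoded as `l + 1 + gap = N`) the SAF-E gradient with respect to `W^l`,
`â^l(t) ⊗ (v·(D_SAF^N W^{N−1})⋯(D_SAF^{l+2} W^{l+1})·D_SAF^{l+1})`, equals the OTTT_O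
gradient `â^l(t) ⊗ (v·(D_OT^N W^{N−1})⋯(D_OT^{l+2} W^{l+1})·D_OT^{l+1})`. -/
theorem safE_grad_eq_otttO_grad
    (lam Vth : ℝ) (n : ℕ → ℕ) (N : ℕ) (hN : 1 ≤ N)
    (Wm : ∀ k, Matrix (Fin (n (k + 1))) (Fin (n k)) ℝ)
    (t : ℕ) (ht : 1 ≤ t)
    (aCur aPrev : ∀ l, Fin (n l) → ℝ)
    (u U : ∀ l, Fin (n l) → ℝ)
    (hu : ∀ l, u l = U l - (Vth * lam) • aPrev l)
    (g : ℝ → ℝ) (v : Fin (n N) → ℝ)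
    (DOT DSAF : ∀ l, Matrix (Fin (n l)) (Fin (n l)) ℝ)
    (hDOT : ∀ l, DOT l = Matrix.diagonal fun i => g (u l i - Vth))
    (hDSAF : ∀ l, DSAF l =
      Matrix.diagonal fun i => g (U l i - Vth * (lam * aPrev l i + 1))) :
    (∀ i, 1 ≤ i → i ≤ N → DSAF i = DOT i) ∧
    ∀ (l gap : ℕ) (h : l + 1 + gap = N),
      Matrix.vecMulVec (aCur l)
        (chainD n Wm DSAF (l + 1) gap (fun i => v (Fin.cast (congrArg n h) i))) =
      Matrix.vecMulVec (aCur l)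
        (chainD n Wm DOT (l + 1) gap (fun i => v (Fin.cast (congrArg n h) i))) := by
  have key : ∀ l, DSAF l = DOT l := by
    intro l
    rw [hDOT, hDSAF]
    have : (fun i => g (U l i - Vth * (lam * aPrev l i + 1)))
        = fun i : Fin (n l) => g (u l i - Vth) := by
      funext i
      rw [hu]
      simp only [Pi.sub_apply, Pi.smul_apply, smul_eq_mul]
      congr 1
      ring
    rw [this]
  exact ⟨fun i _ _ => key i, fun l gap h => by rw [funext key]⟩
end

section
/- Corollary 3(i) (SAF-E is identical to OTTT_O with a feedforward connection): for every layer index i one has D_SAF^i = D_OT^i, and the SAF-E gradient with respect to the feedforward weight W_f, namely â^p(t) ⊗ (v · (D_SAF^N W^{N−1})(D_SAF^{N−1} W^{N−2}) ⋯ (D_SAF^{q+2} W^{q+1}) · D_SAF^{q+1}), equals the OTTT_O gradient â^p(t) ⊗ (v · (D_OT^N W^{N−1})(D_OT^{N−1} W^{N−2}) ⋯ (D_OT^{q+2} W^{q+1}) · D_OT^{q+1}). -/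
open Matrix

/-- Corollary 3(i), SAF-E is identical to OTTT_O with a feedforward
connection: the surrogate diagonals agree, and the SAF-E gradient with respect to the
feedforward weight `W_f` (the outer product of `aCur p` with the backward chain through
the SAF diagonals from layer `N` down to layer `q+1`) equals the OTTT_O gradient. -/
theorem safE_feedforward_grad_eq_otttO
    (lam Vth : ℝ) (n : ℕ → ℕ) (N : ℕ) (hN : 1 ≤ N)
    (Wm : ∀ k, Matrix (Fin (n (k + 1))) (Fin (n k)) ℝ)
    (p q : ℕ) (hp : 1 ≤ p) (hpq : p ≤ q) (hq : q ≤ N - 1) (Wf : Matrix (Fin (n (q + 1))) (Fin (n p)) ℝ)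
    (t : ℕ) (ht : 1 ≤ t)
    (aCur aPrev : ∀ l, Fin (n l) → ℝ)
    (u U : ∀ l, Fin (n l) → ℝ)
    (hu : ∀ l, u l = U l - (Vth * lam) • aPrev l)
    (g : ℝ → ℝ) (v : Fin (n N) → ℝ)
    (DOT DSAF : ∀ l, Matrix (Fin (n l)) (Fin (n l)) ℝ)
    (hDOT : ∀ l, DOT l = Matrix.diagonal fun i => g (u l i - Vth))
    (hDSAF : ∀ l, DSAF l =
      Matrix.diagonal fun i => g (U l i - Vth * (lam * aPrev l i + 1))) :
    (∀ i, 1 ≤ i → i ≤ N → DSAF i = DOT i) ∧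
    ∀ (gap : ℕ) (h : q + 1 + gap = N),
      Matrix.vecMulVec (aCur p)
        (chainD n Wm DSAF (q + 1) gap (fun i => v (Fin.cast (congrArg n h) i))) =
      Matrix.vecMulVec (aCur p)
        (chainD n Wm DOT (q + 1) gap (fun i => v (Fin.cast (congrArg n h) i))) := by
  have hD : DSAF = DOT := by
    funext l
    rw [hDSAF, hDOT]
    have harg : ∀ i, U l i - Vth * (lam * aPrev l i + 1) = u l i - Vth := fun i => by
      have := congrFun (hu l) i
      simp only [Pi.sub_apply, Pi.smul_apply, smul_eq_mul] at this
      rw [this]; ring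
    simp only [harg]
  subst hD
  exact ⟨fun _ _ _ => rfl, fun _ _ => rfl⟩
end

section
/- Theorem 3 (the gradient directions of SAF-F and of Spike Representation with a feedback connection are similar): the Frobenius inner product of the two gradient matrices is strictly positive, i.e., Σ_{a,j} G̃_{aj} G_{aj} > 0, where G̃ := â ⊗ g̃ and G := â ⊗ g with g := g̃ (I − M)⁻¹ (i.e., g_j = Σ_i g̃_i ((I − M)⁻¹)_{ij}). -/
open Matrix

/-!
If `‖M x‖ ≤ c ‖x‖` with `c < 1`, then by Cauchy–Schwarz `x ⬝ᵥ (1 - M) x ≥ (1 - c) ‖x‖² > 0` for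
`x ≠ 0`. Hence `1 - M` is invertible, `g̃ = g (1 - M)` with `g ≠ 0`, and
`⟪â ⊗ g̃, â ⊗ g⟫ = ‖â‖² (g̃ ⬝ᵥ g) = ‖â‖² (g ⬝ᵥ (1 - M) g) > 0`.
-/

theorem Matrix.sum_sum_vecMulVec_mul_vecMulVec {R m n : Type*} [CommSemiring R]
    [Fintype m] [Fintype n] (u : m → R) (v w : n → R) :
    ∑ a, ∑ j, vecMulVec u v a j * vecMulVec u w a j = (u ⬝ᵥ u) * (v ⬝ᵥ w) := by
  rw [dotProduct, dotProduct, Finset.sum_mul_sum]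
  exact Finset.sum_congr rfl fun a _ => Finset.sum_congr rfl fun j _ => by
    simp only [vecMulVec_apply]; ring

section Contraction

variable {n : Type*} [Fintype n] [DecidableEq n] {M : Matrix n n ℝ} {c : ℝ}

theorem Matrix.dotProduct_one_sub_mulVec_pos (hc : c < 1)
    (hM : ∀ x : n → ℝ, √(∑ i, (M *ᵥ x) i ^ 2) ≤ c * √(∑ i, x i ^ 2))
    {x : n → ℝ} (hx : x ≠ 0) : 0 < x ⬝ᵥ ((1 - M) *ᵥ x) := by
  have hxx : 0 < x ⬝ᵥ x := by simpa using dotProduct_star_self_pos_iff.mpr hx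
  set r := √(∑ i, x i ^ 2)
  have hr_sq : r ^ 2 = x ⬝ᵥ x := by
    rw [Real.sq_sqrt (by positivity)]; simp only [dotProduct, sq]
  have hxMx : x ⬝ᵥ (M *ᵥ x) ≤ c * r ^ 2 :=
    calc x ⬝ᵥ (M *ᵥ x) ≤ r * √(∑ i, (M *ᵥ x) i ^ 2) := Real.sum_mul_le_sqrt_mul_sqrt _ _ _
      _ ≤ r * (c * r) := mul_le_mul_of_nonneg_left (hM x) (Real.sqrt_nonneg _)
      _ = c * r ^ 2 := by ring
  rw [sub_mulVec, one_mulVec, dotProduct_sub, ← hr_sq]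
  nlinarith [mul_pos (sub_pos.mpr hc) (hr_sq ▸ hxx)]

theorem Matrix.isUnit_one_sub_of_contraction (hc : c < 1)
    (hM : ∀ x : n → ℝ, √(∑ i, (M *ᵥ x) i ^ 2) ≤ c * √(∑ i, x i ^ 2)) : IsUnit (1 - M) := by
  rw [← mulVec_injective_iff_isUnit, ← coe_mulVecLin, ← LinearMap.ker_eq_bot,
    LinearMap.ker_eq_bot']
  intro x hx
  by_contra hx0
  have hpos := dotProduct_one_sub_mulVec_pos hc hM hx0
  rw [← mulVecLin_apply, hx, dotProduct_zero] at hpos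
  exact hpos.false

end Contraction

/-- Theorem 3, the gradient directions of SAF-F and of Spike Representation
with a feedback connection are similar: if `‖M x‖ ≤ c ‖x‖` (Euclidean norm) for a
constant `c < 1`, `â ≠ 0`, `g̃ ≠ 0`, and `g = g̃ (I − M)⁻¹`, then the Frobenius inner
product of the outer-product gradient matrices `G̃ = â ⊗ g̃` and `G = â ⊗ g` is strictly
positive. -/
theorem safF_spike_representation_feedback_inner_product_pos
    (n k : ℕ) (M : Matrix (Fin n) (Fin n) ℝ) (c : ℝ) (hc : c < 1)
    (hM : ∀ x : Fin n → ℝ,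
      Real.sqrt (∑ i, (M.mulVec x i) ^ 2) ≤ c * Real.sqrt (∑ i, (x i) ^ 2))
    (ahat : Fin k → ℝ) (ha : ahat ≠ 0)
    (gtilde : Fin n → ℝ) (hgt : gtilde ≠ 0)
    (g : Fin n → ℝ) (hg : g = Matrix.vecMul gtilde (1 - M)⁻¹) :
    0 < ∑ a, ∑ j,
      Matrix.vecMulVec ahat gtilde a j * Matrix.vecMulVec ahat g a j := by
  have hunit := isUnit_one_sub_of_contraction hc hM
  have hg_mul : g ᵥ* (1 - M) = gtilde := by
    rw [hg, vecMul_vecMul, nonsing_inv_mul _ ((isUnit_iff_isUnit_det _).mp hunit), vecMul_one]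
  have hg0 : g ≠ 0 := by
    rintro rfl
    exact hgt (by rw [← hg_mul, zero_vecMul])
  have ha_pos : 0 < ahat ⬝ᵥ ahat := by simpa using dotProduct_star_self_pos_iff.mpr ha
  rw [sum_sum_vecMulVec_mul_vecMulVec, ← hg_mul, ← dotProduct_mulVec]
  exact mul_pos ha_pos (dotProduct_one_sub_mulVec_pos hc hM hg0)
end

section
/- The sequences (u, s) defined from the SAF forward process with a feedforward connection satisfy the LIF dynamics with feedforward connection: for every t ≥ 1, u(t) = λ(u(t−1) − V_th s(t−1)) + W x(t) + b + W_f x_f(t) and s(t)_i = H(u(t)_i − V_th) for every coordinate i; moreover â(t) = Σ_{τ=0}^{t} λ^(t−τ) s(τ) for all t. Hence the forward processes of SAF and of the LIF network with a feedforward connection are mutually convertible. -/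
open Finset Matrix

private lemma shift_sum {k : ℕ} (lam : ℝ) (y : ℕ → Fin k → ℝ) (t : ℕ) :
    ∑ τ ∈ Finset.range (t + 2), lam ^ (t + 1 - τ) • y τ
      = lam • ∑ τ ∈ Finset.range (t + 1), lam ^ (t - τ) • y τ + y (t + 1) := by
  rw [Finset.sum_range_succ, Nat.sub_self, pow_zero, one_smul, Finset.smul_sum]
  congr 1
  refine Finset.sum_congr rfl fun τ hτ => ?_
  have hτt : τ ≤ t := Nat.lt_succ_iff.mp (Finset.mem_range.mp hτ)
  rw [smul_smul, show t + 1 - τ = (t - τ) + 1 by omega, pow_succ]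
  ring_nf

private lemma geom_shift (lam : ℝ) (t : ℕ) :
    ∑ τ ∈ Finset.range (t + 1), lam ^ τ
      = lam * ∑ τ ∈ Finset.range t, lam ^ τ + 1 := by
  rw [Finset.sum_range_succ', Finset.mul_sum]
  simp [pow_succ, mul_comm]

/-- the sequences `(u, s)` defined from the SAF forward process with a
feedforward connection satisfy the LIF dynamics with feedforward connection, and
`â(t) = ∑_{τ≤t} λ^(t−τ) s(τ)`; hence the two forward processes are mutually convertible. -/
theorem saf_feedforward_gives_lif
    (lam Vth : ℝ) (m n p : ℕ)
    (W : Matrix (Fin n) (Fin m) ℝ) (Wf : Matrix (Fin n) (Fin p) ℝ)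
    (b : Fin n → ℝ)
    (x : ℕ → Fin m → ℝ) (hx0 : x 0 = 0)
    (xf : ℕ → Fin p → ℝ) (hxc0 : xf 0 = 0)
    (u₀ : Fin n → ℝ)
    (ax : ℕ → Fin m → ℝ)
    (hax : ∀ t, ax t = ∑ τ ∈ Finset.range (t + 1), lam ^ (t - τ) • x τ)
    (af : ℕ → Fin p → ℝ)
    (hac : ∀ t, af t = ∑ τ ∈ Finset.range (t + 1), lam ^ (t - τ) • xf τ)
    (ahat U : ℕ → Fin n → ℝ)
    (ha0 : ahat 0 = 0)
    (hU0 : U 0 = u₀)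
    (hU : ∀ t, 1 ≤ t →
      U t = W.mulVec (ax t) + (∑ τ ∈ Finset.range t, lam ^ τ) • b
        + lam ^ t • u₀ + Wf.mulVec (af t))
    (ha : ∀ t, 1 ≤ t → ∀ i,
      ahat t i = lam * ahat (t - 1) i
        + Heaviside (U t i - Vth * (lam * ahat (t - 1) i + 1)))
    (s u : ℕ → Fin n → ℝ)
    (hs0 : s 0 = 0)
    (hsdef : ∀ t, 1 ≤ t → s t = ahat t - lam • ahat (t - 1))
    (hu0 : u 0 = u₀)
    (hudef : ∀ t, 1 ≤ t → u t = U t - (Vth * lam) • ahat (t - 1)) :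
    (∀ t, 1 ≤ t →
      (u t = lam • (u (t - 1) - Vth • s (t - 1)) + W.mulVec (x t) + b
          + Wf.mulVec (xf t) ∧
        ∀ i, s t i = Heaviside (u t i - Vth))) ∧
    (∀ t, ahat t = ∑ τ ∈ Finset.range (t + 1), lam ^ (t - τ) • s τ) := by
  constructor
  · intro t ht
    constructor
    · -- membrane potential dynamics
      rcases Nat.lt_or_ge t 2 with h2 | h2
      · have ht1 : t = 1 := by omega
        subst ht1
        have hax1 : ax 1 = x 1 := by
          rw [hax 1, Finset.sum_range_succ, Finset.sum_range_one]
          simp [hx0]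
        have haf1 : af 1 = xf 1 := by
          rw [hac 1, Finset.sum_range_succ, Finset.sum_range_one]
          simp [hxc0]
        rw [hudef 1 le_rfl, hU 1 le_rfl, hax1, haf1]
        have e : (1:ℕ) - 1 = 0 := rfl
        rw [e, ha0, hu0, hs0]
        funext i
        simp [Finset.sum_range_one]
        ring
      · obtain ⟨k, rfl⟩ : ∃ k, t = k + 2 := ⟨t - 2, by omega⟩
        have haxS : ax (k + 2) = lam • ax (k + 1) + x (k + 2) := by
          rw [hax (k + 2), hax (k + 1)]; exact shift_sum lam x (k + 1)
        have hafS : af (k + 2) = lam • af (k + 1) + xf (k + 2) := by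
          rw [hac (k + 2), hac (k + 1)]; exact shift_sum lam xf (k + 1)
        have hUS : U (k + 2) = lam • U (k + 1) + W.mulVec (x (k + 2)) + b
            + Wf.mulVec (xf (k + 2)) := by
          rw [hU (k + 2) (by omega), hU (k + 1) (by omega), haxS, hafS,
            geom_shift lam (k + 1)]
          funext i
          simp [Matrix.mulVec_add, Matrix.mulVec_smul, Pi.add_apply, Pi.smul_apply,
            smul_eq_mul]
          ring
        have key : u (k + 1) - Vth • s (k + 1) = U (k + 1) - Vth • ahat (k + 1) := by
          rw [hudef (k + 1) (by omega), hsdef (k + 1) (by omega)]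
          have e : k + 1 - 1 = k := rfl
          rw [e]
          funext i
          simp [Pi.sub_apply, Pi.smul_apply, smul_eq_mul]
          ring
        have e2 : k + 2 - 1 = k + 1 := rfl
        rw [hudef (k + 2) (by omega), hUS, e2, key]
        funext i
        simp [Pi.add_apply, Pi.sub_apply, Pi.smul_apply, smul_eq_mul]
        ring
    · -- spike equation
      intro i
      rw [hsdef t ht]
      simp only [Pi.sub_apply, Pi.smul_apply, smul_eq_mul]
      rw [ha t ht i, hudef t ht]
      simp only [Pi.sub_apply, Pi.smul_apply, smul_eq_mul]
      rw [add_sub_cancel_left]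
      congr 1
      ring
  · intro t
    induction t with
    | zero => simp [ha0, hs0, Finset.sum_range_one]
    | succ k ih =>
      have hrec : ahat (k + 1) = lam • ahat k + s (k + 1) := by
        rw [hsdef (k + 1) (by omega)]
        have e : k + 1 - 1 = k := rfl
        rw [e]
        funext i
        simp
      rw [hrec, ih, shift_sum lam s k]
end

section
/- The sequences (u, s) defined from the SAF forward process with a feedback connection satisfy the LIF dynamics with feedback connection: for every t ≥ 1, u(t) = λ(u(t−1) − V_th s(t−1)) + W x(t) + b + W_b x_b(t−1) and s(t)_i = H(u(t)_i − V_th) for every coordinate i; moreover â(t) = Σ_{τ=0}^{t} λ^(t−τ) s(τ) for all t. Hence the forward processes of SAF and of the LIF network with a feedback connection are mutually convertible. -/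
open Finset Matrix

private lemma step_sum {α : Type*} [AddCommMonoid α] [Module ℝ α]
    (lam : ℝ) (f : ℕ → α) (t : ℕ) :
    ∑ τ ∈ Finset.range (t + 2), lam ^ (t + 1 - τ) • f τ
      = lam • ∑ τ ∈ Finset.range (t + 1), lam ^ (t - τ) • f τ + f (t + 1) := by
  rw [Finset.sum_range_succ, Finset.smul_sum]
  simp only [Nat.sub_self, pow_zero, one_smul]
  congr 1
  apply Finset.sum_congr rfl
  intro τ hτ
  rw [Finset.mem_range] at hτ
  have h : t + 1 - τ = (t - τ) + 1 := by omega
  rw [h, pow_succ']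
  exact (smul_smul _ _ _).symm

/-- the sequences `(u, s)` defined from the SAF forward process with a
feedback connection satisfy the LIF dynamics with feedback connection, and
`â(t) = ∑_{τ≤t} λ^(t−τ) s(τ)`; hence the two forward processes are mutually convertible. -/
theorem saf_feedback_gives_lif
    (lam Vth : ℝ) (m n p : ℕ)
    (W : Matrix (Fin n) (Fin m) ℝ) (Wb : Matrix (Fin n) (Fin p) ℝ)
    (b : Fin n → ℝ)
    (x : ℕ → Fin m → ℝ) (hx0 : x 0 = 0)
    (xb : ℕ → Fin p → ℝ) (hxc0 : xb 0 = 0)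
    (u₀ : Fin n → ℝ)
    (ax : ℕ → Fin m → ℝ)
    (hax : ∀ t, ax t = ∑ τ ∈ Finset.range (t + 1), lam ^ (t - τ) • x τ)
    (ab : ℕ → Fin p → ℝ)
    (hac : ∀ t, ab t = ∑ τ ∈ Finset.range (t + 1), lam ^ (t - τ) • xb τ)
    (ahat U : ℕ → Fin n → ℝ)
    (ha0 : ahat 0 = 0)
    (hU0 : U 0 = u₀)
    (hU : ∀ t, 1 ≤ t →
      U t = W.mulVec (ax t) + (∑ τ ∈ Finset.range t, lam ^ τ) • b
        + lam ^ t • u₀ + Wb.mulVec (ab (t - 1)))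
    (ha : ∀ t, 1 ≤ t → ∀ i,
      ahat t i = lam * ahat (t - 1) i
        + Heaviside (U t i - Vth * (lam * ahat (t - 1) i + 1)))
    (s u : ℕ → Fin n → ℝ)
    (hs0 : s 0 = 0)
    (hsdef : ∀ t, 1 ≤ t → s t = ahat t - lam • ahat (t - 1))
    (hu0 : u 0 = u₀)
    (hudef : ∀ t, 1 ≤ t → u t = U t - (Vth * lam) • ahat (t - 1)) :
    (∀ t, 1 ≤ t →
      (u t = lam • (u (t - 1) - Vth • s (t - 1)) + W.mulVec (x t) + b
          + Wb.mulVec (xb (t - 1)) ∧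
        ∀ i, s t i = Heaviside (u t i - Vth))) ∧
    (∀ t, ahat t = ∑ τ ∈ Finset.range (t + 1), lam ^ (t - τ) • s τ) := by
  have haxstep : ∀ t, ax (t + 1) = lam • ax t + x (t + 1) := by
    intro t; rw [hax (t + 1), hax t]; exact step_sum lam x t
  have habstep : ∀ t, ab (t + 1) = lam • ab t + xb (t + 1) := by
    intro t; rw [hac (t + 1), hac t]; exact step_sum lam xb t
  have hUstep : ∀ t, U (t + 1) = lam • U t + W.mulVec (x (t + 1)) + b
      + Wb.mulVec (xb t) := by
    intro t
    cases t with
    | zero =>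
      rw [hU 1 le_rfl, hU0]
      have h1 : ax 1 = x 1 := by
        rw [hax 1]; simp [Finset.sum_range_succ, hx0]
      have h2 : ab 0 = xb 0 := by rw [hac 0]; simp
      rw [h1, h2, hxc0]
      simp [mulVec_zero]
      module
    | succ k =>
      rw [hU (k + 2) (by omega), hU (k + 1) (by omega)]
      have hk : k + 2 - 1 = k + 1 := rfl
      have hk' : k + 1 - 1 = k := rfl
      rw [hk, hk']
      rw [haxstep (k + 1), habstep k, geom_sum_succ (n := k + 1),
        Matrix.mulVec_add, Matrix.mulVec_smul, Matrix.mulVec_add, Matrix.mulVec_smul]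
      module
  have hmain : ∀ t, 1 ≤ t →
      u t = lam • (u (t - 1) - Vth • s (t - 1)) + W.mulVec (x t) + b
        + Wb.mulVec (xb (t - 1)) := by
    intro t ht
    obtain ⟨k, rfl⟩ : ∃ k, t = k + 1 := ⟨t - 1, by omega⟩
    simp only [Nat.add_sub_cancel]
    rw [hudef (k + 1) (by omega), hUstep k]
    simp only [Nat.add_sub_cancel]
    cases k with
    | zero =>
      rw [hu0, hs0, ha0, hU0]
      simp only [smul_zero, sub_zero]
    | succ j =>
      rw [hudef (j + 1) (by omega), hsdef (j + 1) (by omega)]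
      simp only [Nat.add_sub_cancel]
      module
  refine ⟨fun t ht => ⟨hmain t ht, ?_⟩, ?_⟩
  · intro i
    have h1 : s t i = ahat t i - lam * ahat (t - 1) i := by
      rw [hsdef t ht]; simp
    have h2 : u t i = U t i - Vth * lam * ahat (t - 1) i := by
      rw [hudef t ht]; simp
    rw [h1, h2]
    have := ha t ht i
    rw [this]
    ring_nf
  · intro t
    induction t with
    | zero => simp [ha0, hs0]
    | succ k ih =>
      rw [step_sum, ← ih]
      have := hsdef (k + 1) (by omega)
      simp only [Nat.add_sub_cancel] at this
      rw [this]
      module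
end
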